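/- arXiv:2008.11559 — 2 statements merged into one kernel-verified Lean document; each statement's English description precedes it below -/
import Mathlib

section
/- With μ = (√(ab)+√(ab-4))/2 for reals a,b ≥ 2 with ab ≥ 5, and h_n = (μⁿ-μ⁻ⁿ)/(μ-μ⁻¹), one has for all n ≥ 0: √(ab)·h_{2n+1} - 2·h_{2n} > 0 and √(ab)·h_{2n+2} - 2·h_{2n+1} > 0. -/
/-- For `a, b ≥ 2` with `ab ≥ 5`, `μ = (√(ab)+√(ab-4))/2` and
`h_n = (μⁿ - μ⁻ⁿ)/(μ - μ⁻¹)`, one has `√(ab)·h_{2n+1} - 2·h_{2n} > 0` and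
`√(ab)·h_{2n+2} - 2·h_{2n+1} > 0` for all `n ≥ 0`. -/
theorem stmt4 (a b : ℝ) (ha : 2 ≤ a) (hb : 2 ≤ b) (hab : 5 ≤ a * b)
    (μ : ℝ) (hμ : μ = (Real.sqrt (a * b) + Real.sqrt (a * b - 4)) / 2)
    (h : ℕ → ℝ) (hh : ∀ n, h n = (μ ^ n - (1 / μ) ^ n) / (μ - 1 / μ)) :
    ∀ n : ℕ, 0 < Real.sqrt (a * b) * h (2 * n + 1) - 2 * h (2 * n) ∧
      0 < Real.sqrt (a * b) * h (2 * n + 2) - 2 * h (2 * n + 1) := by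
  have hs2 : Real.sqrt (a * b) ^ 2 = a * b := Real.sq_sqrt (by linarith)
  have hd2 : Real.sqrt (a * b - 4) ^ 2 = a * b - 4 := Real.sq_sqrt (by linarith)
  have hd0 : 0 ≤ Real.sqrt (a * b - 4) := Real.sqrt_nonneg _
  have hd1 : 1 ≤ Real.sqrt (a * b - 4) := by nlinarith
  have hs0 : 0 ≤ Real.sqrt (a * b) := Real.sqrt_nonneg _
  have hsgt : 2 < Real.sqrt (a * b) := by nlinarith
  have hμ1 : 1 < μ := by rw [hμ]; nlinarith
  have hμ0 : (0:ℝ) < μ := by linarith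
  have hμne : μ ≠ 0 := ne_of_gt hμ0
  have hsum : Real.sqrt (a * b) = μ + 1 / μ := by
    have hmul : μ * (Real.sqrt (a * b) - μ) = 1 := by
      rw [hμ]; linear_combination (hs2 - hd2) / 4
    have h1 : Real.sqrt (a * b) - μ = 1 / μ :=
      eq_one_div_of_mul_eq_one_left (by linarith [hmul] : (Real.sqrt (a*b) - μ) * μ = 1)
    linarith
  have hdenom : 0 < μ - 1 / μ := by
    have : 1 / μ < 1 := by
      rw [div_lt_one hμ0]; exact hμ1
    linarith
  have key : ∀ m : ℕ, 0 < Real.sqrt (a * b) * h (m + 1) - 2 * h m := by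
    intro m
    rw [hh (m + 1), hh m, hsum]
    have hrw : (μ + 1 / μ) * ((μ ^ (m + 1) - (1 / μ) ^ (m + 1)) / (μ - 1 / μ))
        - 2 * ((μ ^ m - (1 / μ) ^ m) / (μ - 1 / μ))
        = ((μ ^ 2 - 1) * (μ ^ m + (1 / μ) ^ (m + 2))) / (μ - 1 / μ) := by
      have hinv : μ * (1 / μ) = 1 := by field_simp
      linear_combination ((μ ^ m - (1 / μ) ^ m - (1 / μ) ^ m * (μ * (1 / μ) + 1)) / (μ - 1 / μ)) * hinv
    rw [hrw]
    apply div_pos _ hdenom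
    have h1 : 0 < μ ^ 2 - 1 := by nlinarith
    have h2 : 0 < μ ^ m + (1 / μ) ^ (m + 2) := by positivity
    exact mul_pos h1 h2
  intro n
  refine ⟨key (2 * n), ?_⟩
  have := key (2 * n + 1)
  convert this using 3 <;> ring
end

section
/- The linear map ψ: ℂ³ → S_2(ℂ) defined by ψ(x,y,z) = [[y-z, y-x],[y-x, z]] is a linear isomorphism from the span of the simple roots α_1, α_2, α_3 of the Feingold–Frenkel algebra ℱ onto the space of 2×2 symmetric complex matrices, and the bilinear form (λ|λ) = -2·det(ψ(λ)) satisfies (α_i|α_j) = a_{ij} for the Cartan matrix A = [[2,-2,0],[-2,2,-1],[0,-1,2]]. -/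
open Matrix

/-- The map `ψ(x,y,z) = [[y-z, y-x],[y-x, z]]` is a linear isomorphism from the span of
the simple roots of the Feingold–Frenkel algebra (identified with `ℂ³` via the
simple-root basis) onto the `2×2` symmetric complex matrices, and the form
`(λ|λ) = -2 det ψ(λ)` polarizes to `(αᵢ|αⱼ) = aᵢⱼ` for the Cartan matrix
`A = [[2,-2,0],[-2,2,-1],[0,-1,2]]`. -/
theorem stmt5 (ψ : (Fin 3 → ℂ) → Matrix (Fin 2) (Fin 2) ℂ)
    (hψ : ψ = fun v => !![v 1 - v 2, v 1 - v 0; v 1 - v 0, v 2])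
    (A : Matrix (Fin 3) (Fin 3) ℂ)
    (hA : A = !![2, -2, 0; -2, 2, -1; 0, -1, 2])
    (e : Fin 3 → Fin 3 → ℂ) (he : e = fun i => Pi.single i 1) :
    (∀ (c : ℂ) (v w : Fin 3 → ℂ), ψ (c • v + w) = c • ψ v + ψ w) ∧
      Function.Injective ψ ∧
      (∀ v, (ψ v).IsSymm) ∧
      (∀ M : Matrix (Fin 2) (Fin 2) ℂ, M.IsSymm → ∃ v, ψ v = M) ∧
      (∀ i j, (-2 * (ψ (e i + e j)).det - (-2 * (ψ (e i)).det) -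
        (-2 * (ψ (e j)).det)) / 2 = A i j) := by
  subst hψ hA he
  refine ⟨?_, ?_, ?_, ?_, ?_⟩
  · intro c v w
    ext i j
    fin_cases i <;> fin_cases j <;>
      simp [Matrix.smul_apply, Pi.smul_apply, Pi.add_apply] <;> ring
  · intro v w h
    have h00 := congrFun (congrFun h 0) 0
    have h01 := congrFun (congrFun h 0) 1
    have h11 := congrFun (congrFun h 1) 1
    simp at h00 h01 h11
    funext i
    fin_cases i <;> simp
    · linear_combination h00 + h11 - h01
    · linear_combination h00 + h11
    · exact h11
  · intro v
    ext i j
    fin_cases i <;> fin_cases j <;> simp [Matrix.IsSymm, Matrix.transpose_apply]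
  · intro M hM
    refine ⟨![M 0 0 + M 1 1 - M 0 1, M 0 0 + M 1 1, M 1 1], ?_⟩
    have h10 : M 1 0 = M 0 1 := by
      have := congrFun (congrFun hM 0) 1
      simpa [Matrix.transpose_apply] using this
    ext i j
    fin_cases i <;> fin_cases j <;> simp [h10] <;> ring
  · intro i j
    fin_cases i <;> fin_cases j <;>
      simp [Matrix.det_fin_two, Pi.single_apply] <;> ring
end
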